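/- Let 𝓜 ⊂ ℂ⁴ be the union of the hyperplanes {α_i = n} for i ∈ {0,1,3,4}, n ∈ ℤ, and {α₀ ± α₁ ± α₃ ± α₄ = 2n+1} for all sign choices and n ∈ ℤ. If (α₀, α₁, α₃, α₄) ∉ 𝓜, then for every i ∈ {0,1,2,3,4}, the image of (α₀, α₁, α₃, α₄) under the parameter action of s_i is also not in 𝓜. Hence the whole orbit under the group generated by s₀,…,s₄ avoids 𝓜. -/

import Mathlib

/-- The union `𝓜` of the reflecting hyperplanes of Okamoto's affine `D₄` action:
`α_i ∈ ℤ` for `i ∈ {0,1,3,4}` and `α₀ ± α₁ ± α₃ ± α₄` an odd integer. -/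
def calM : Set (ℂ × ℂ × ℂ × ℂ) :=
  {p | (∃ n : ℤ, p.1 = n ∨ p.2.1 = n ∨ p.2.2.1 = n ∨ p.2.2.2 = n) ∨
    ∃ ε₁ ε₃ ε₄ : ℤ, (ε₁ = 1 ∨ ε₁ = -1) ∧ (ε₃ = 1 ∨ ε₃ = -1) ∧ (ε₄ = 1 ∨ ε₄ = -1) ∧
      ∃ n : ℤ, p.1 + ε₁ * p.2.1 + ε₃ * p.2.2.1 + ε₄ * p.2.2.2 = 2 * n + 1}

/-- The parameter action of `s₀,…,s₄` on `(α₀,α₁,α₃,α₄)`, where `α₂` is recovered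
from the affine relation as `α₂ = (1 - α₀ - α₁ - α₃ - α₄)/2`. -/
def rS0 : Function.End (ℂ × ℂ × ℂ × ℂ) := fun p => (-p.1, p.2.1, p.2.2.1, p.2.2.2)
def rS1 : Function.End (ℂ × ℂ × ℂ × ℂ) := fun p => (p.1, -p.2.1, p.2.2.1, p.2.2.2)
noncomputable def rS2 : Function.End (ℂ × ℂ × ℂ × ℂ) := fun p =>
  let a2 := (1 - p.1 - p.2.1 - p.2.2.1 - p.2.2.2) / 2
  (p.1 + a2, p.2.1 + a2, p.2.2.1 + a2, p.2.2.2 + a2)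
def rS3 : Function.End (ℂ × ℂ × ℂ × ℂ) := fun p => (p.1, p.2.1, -p.2.2.1, p.2.2.2)
def rS4 : Function.End (ℂ × ℂ × ℂ × ℂ) := fun p => (p.1, p.2.1, p.2.2.1, -p.2.2.2)


section aux

lemma inv0 (p : ℂ × ℂ × ℂ × ℂ) (h : rS0 p ∈ calM) : p ∈ calM := by
  simp only [rS0, calM, Set.mem_setOf_eq] at h ⊢
  obtain ⟨n, h | h | h | h⟩ | ⟨e1, e3, e4, h1, h3, h4, n, h⟩ := h
  · exact Or.inl ⟨-n, Or.inl (by push_cast; linear_combination -h)⟩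
  · exact Or.inl ⟨n, Or.inr (Or.inl h)⟩
  · exact Or.inl ⟨n, Or.inr (Or.inr (Or.inl h))⟩
  · exact Or.inl ⟨n, Or.inr (Or.inr (Or.inr h))⟩
  · exact Or.inr ⟨-e1, -e3, -e4, by omega, by omega, by omega, -n - 1,
      by push_cast; linear_combination -h⟩

lemma inv1 (p : ℂ × ℂ × ℂ × ℂ) (h : rS1 p ∈ calM) : p ∈ calM := by
  simp only [rS1, calM, Set.mem_setOf_eq] at h ⊢
  obtain ⟨n, h | h | h | h⟩ | ⟨e1, e3, e4, h1, h3, h4, n, h⟩ := h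
  · exact Or.inl ⟨n, Or.inl h⟩
  · exact Or.inl ⟨-n, Or.inr (Or.inl (by push_cast; linear_combination -h))⟩
  · exact Or.inl ⟨n, Or.inr (Or.inr (Or.inl h))⟩
  · exact Or.inl ⟨n, Or.inr (Or.inr (Or.inr h))⟩
  · exact Or.inr ⟨-e1, e3, e4, by omega, h3, h4, n, by push_cast; linear_combination h⟩

lemma inv3 (p : ℂ × ℂ × ℂ × ℂ) (h : rS3 p ∈ calM) : p ∈ calM := by
  simp only [rS3, calM, Set.mem_setOf_eq] at h ⊢
  obtain ⟨n, h | h | h | h⟩ | ⟨e1, e3, e4, h1, h3, h4, n, h⟩ := h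
  · exact Or.inl ⟨n, Or.inl h⟩
  · exact Or.inl ⟨n, Or.inr (Or.inl h)⟩
  · exact Or.inl ⟨-n, Or.inr (Or.inr (Or.inl (by push_cast; linear_combination -h)))⟩
  · exact Or.inl ⟨n, Or.inr (Or.inr (Or.inr h))⟩
  · exact Or.inr ⟨e1, -e3, e4, h1, by omega, h4, n, by push_cast; linear_combination h⟩

lemma inv4 (p : ℂ × ℂ × ℂ × ℂ) (h : rS4 p ∈ calM) : p ∈ calM := by
  simp only [rS4, calM, Set.mem_setOf_eq] at h ⊢
  obtain ⟨n, h | h | h | h⟩ | ⟨e1, e3, e4, h1, h3, h4, n, h⟩ := h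
  · exact Or.inl ⟨n, Or.inl h⟩
  · exact Or.inl ⟨n, Or.inr (Or.inl h)⟩
  · exact Or.inl ⟨n, Or.inr (Or.inr (Or.inl h))⟩
  · exact Or.inl ⟨-n, Or.inr (Or.inr (Or.inr (by push_cast; linear_combination -h)))⟩
  · exact Or.inr ⟨e1, e3, -e4, h1, h3, by omega, n, by push_cast; linear_combination h⟩

lemma inv2 (p : ℂ × ℂ × ℂ × ℂ) (h : rS2 p ∈ calM) : p ∈ calM := by
  simp only [rS2, calM, Set.mem_setOf_eq] at h ⊢
  obtain ⟨n, h | h | h | h⟩ | ⟨e1, e3, e4, h1, h3, h4, n, h⟩ := h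
  · exact Or.inr ⟨-1, -1, -1, by norm_num, by norm_num, by norm_num, n - 1,
      by push_cast; linear_combination 2 * h⟩
  · exact Or.inr ⟨-1, 1, 1, by norm_num, by norm_num, by norm_num, -n,
      by push_cast; linear_combination -2 * h⟩
  · exact Or.inr ⟨1, -1, 1, by norm_num, by norm_num, by norm_num, -n,
      by push_cast; linear_combination -2 * h⟩
  · exact Or.inr ⟨1, 1, -1, by norm_num, by norm_num, by norm_num, -n,
      by push_cast; linear_combination -2 * h⟩
  · rcases h1 with rfl | rfl <;> rcases h3 with rfl | rfl <;> rcases h4 with rfl | rfl <;>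
      push_cast at h
    · exact Or.inr ⟨1, 1, 1, by norm_num, by norm_num, by norm_num, -n,
        by push_cast; linear_combination -h⟩
    · exact Or.inl ⟨-n, Or.inr (Or.inr (Or.inr (by push_cast; linear_combination (-1/2 : ℂ) * h)))⟩
    · exact Or.inl ⟨-n, Or.inr (Or.inr (Or.inl (by push_cast; linear_combination (-1/2 : ℂ) * h)))⟩
    · exact Or.inr ⟨1, -1, -1, by norm_num, by norm_num, by norm_num, n,
        by push_cast; linear_combination h⟩
    · exact Or.inl ⟨-n, Or.inr (Or.inl (by push_cast; linear_combination (-1/2 : ℂ) * h))⟩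
    · exact Or.inr ⟨-1, 1, -1, by norm_num, by norm_num, by norm_num, n,
        by push_cast; linear_combination h⟩
    · exact Or.inr ⟨-1, -1, 1, by norm_num, by norm_num, by norm_num, n,
        by push_cast; linear_combination h⟩
    · exact Or.inl ⟨n + 1, Or.inl (by push_cast; linear_combination (1/2 : ℂ) * h)⟩

end aux

/-- If `(α₀,α₁,α₃,α₄) ∉ 𝓜` then each `s_i` image is not in `𝓜`; hence the whole orbit
under the group generated by `s₀,…,s₄` avoids `𝓜`. -/
theorem orbit_avoids_M (p : ℂ × ℂ × ℂ × ℂ) (hp : p ∉ calM) :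
    (rS0 p ∉ calM ∧ rS1 p ∉ calM ∧ rS2 p ∉ calM ∧ rS3 p ∉ calM ∧ rS4 p ∉ calM) ∧
    ∀ g ∈ Submonoid.closure {rS0, rS1, rS2, rS3, rS4}, g p ∉ calM := by
  refine ⟨⟨fun h => hp (inv0 p h), fun h => hp (inv1 p h), fun h => hp (inv2 p h),
    fun h => hp (inv3 p h), fun h => hp (inv4 p h)⟩, ?_⟩
  intro g hg
  refine Submonoid.closure_induction
    (motive := fun g _ => ∀ q, q ∉ calM → g q ∉ calM) ?_ ?_ ?_ hg p hp
  · intro x hx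
    simp only [Set.mem_insert_iff, Set.mem_singleton_iff] at hx
    rcases hx with rfl | rfl | rfl | rfl | rfl
    · exact fun q hq h => hq (inv0 q h)
    · exact fun q hq h => hq (inv1 q h)
    · exact fun q hq h => hq (inv2 q h)
    · exact fun q hq h => hq (inv3 q h)
    · exact fun q hq h => hq (inv4 q h)
  · exact fun q hq => hq
  · exact fun x y _ _ hx hy q hq => hx _ (hy q hq)
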